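/- For every positive integer m, binom(3m, m)·(2m)!·Π_{j=0}^{2m−1} (3j+1)!/(2m+j+1)! = ((1/2^m)·Π_{i=1}^{m} (6i−2)!(2i−1)!/((4i−1)!(4i−2)!))^2. -/

import Mathlib

/-!
Clearing denominators turns the identity into one between natural numbers, after writing
`∏_{j<2m} (2m+j+1)!` as the quotient of superfactorials `sf (4m) / sf (2m)` and
`C(3m, m) (2m)!` as `(3m)! / m!`. Both sides of that identity are multiplied by the same factor
when `m` increases by one, which comes down to a polynomial identity once the factorials
`(6m+4)!, (4m+4)!, (4m+2)!, (2m+2)!` are expanded in terms of `(6m+1)!, (4m+3)!, (4m+1)!, (2m+1)!`.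
-/

open Finset Nat

theorem prod_Icc_one_eq_prod_range {M : Type*} [CommMonoid M] (f : ℕ → M) (n : ℕ) :
    ∏ i ∈ Icc 1 n, f i = ∏ i ∈ range n, f (i + 1) := by
  rw [range_eq_Ico, prod_Ico_add' f 0 n 1]
  rfl

theorem superFactorial_pos (n : ℕ) : 0 < superFactorial n := by
  rw [← prod_range_succ_factorial]
  positivity

theorem superFactorial_mul_prod_range_factorial (n k : ℕ) :
    superFactorial n * ∏ j ∈ range k, (n + j + 1)! = superFactorial (n + k) := by
  induction k with
  | zero => simp
  | succ k ih => rw [prod_range_succ, ← mul_assoc, ih, ← add_assoc, superFactorial_succ, mul_comm]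

theorem factorial_step_identity (m : ℕ) :
    (3*m+1) * (3*m+2) * (3*m+3) * ((6*m+1)! * (6*m+4)!) * ((2*m+1)! * (2*m+2)!) * 4 *
        ((4*m+3)! * (4*m+2)!) ^ 2 =
      (m+1) * ((4*m+1)! * (4*m+2)! * (4*m+3)! * (4*m+4)!) * ((6*m+4)! * (2*m+1)!) ^ 2 := by
  simp only [factorial_succ]
  ring

theorem factorial_mul_prod_eq (m : ℕ) :
    (3*m)! * (∏ j ∈ range (2*m), (3*j+1)!) * superFactorial (2*m) * 4 ^ m *
        (∏ i ∈ range m, (4*i+3)! * (4*i+2)!) ^ 2 =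
      m ! * superFactorial (4*m) * (∏ i ∈ range m, (6*i+4)! * (2*i+1)!) ^ 2 := by
  induction m with
  | zero => simp
  | succ m ih =>
    have lhs_succ :
        (3*(m+1))! * (∏ j ∈ range (2*(m+1)), (3*j+1)!) * superFactorial (2*(m+1)) * 4 ^ (m+1) *
          (∏ i ∈ range (m+1), (4*i+3)! * (4*i+2)!) ^ 2 =
        ((3*m)! * (∏ j ∈ range (2*m), (3*j+1)!) * superFactorial (2*m) * 4 ^ m *
          (∏ i ∈ range m, (4*i+3)! * (4*i+2)!) ^ 2) *
        ((3*m+1) * (3*m+2) * (3*m+3) * ((6*m+1)! * (6*m+4)!) * ((2*m+1)! * (2*m+2)!) * 4 *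
          ((4*m+3)! * (4*m+2)!) ^ 2) := by
      rw [show 3*(m+1) = 3*m+2+1 by ring, show 2*(m+1) = 2*m+1+1 by ring]
      simp only [prod_range_succ, superFactorial_succ, factorial_succ (3*m+2),
        factorial_succ (3*m+1), factorial_succ (3*m)]
      rw [show 3*(2*m)+1 = 6*m+1 by ring, show 3*(2*m+1)+1 = 6*m+4 by ring]
      ring
    have rhs_succ :
        (m+1)! * superFactorial (4*(m+1)) * (∏ i ∈ range (m+1), (6*i+4)! * (2*i+1)!) ^ 2 =
        (m ! * superFactorial (4*m) * (∏ i ∈ range m, (6*i+4)! * (2*i+1)!) ^ 2) *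
        ((m+1) * ((4*m+1)! * (4*m+2)! * (4*m+3)! * (4*m+4)!) * ((6*m+4)! * (2*m+1)!) ^ 2) := by
      rw [show 4*(m+1) = 4*m+3+1 by ring]
      simp only [prod_range_succ, superFactorial_succ, factorial_succ m]
      ring
    rw [lhs_succ, rhs_succ, ih, factorial_step_identity]

theorem choose_mul_factorial_mul_prod_eq (m : ℕ) :
    (3*m).choose m * (2*m)! * (∏ j ∈ range (2*m), (3*j+1)!) * 4 ^ m *
        (∏ i ∈ range m, (4*i+3)! * (4*i+2)!) ^ 2 =
      (∏ j ∈ range (2*m), (2*m+j+1)!) * (∏ i ∈ range m, (6*i+4)! * (2*i+1)!) ^ 2 := by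
  have key := factorial_mul_prod_eq m
  rw [← choose_mul_factorial_mul_factorial (by omega : m ≤ 3*m), show 3*m - m = 2*m by omega,
    show 4*m = 2*m + 2*m by ring, ← superFactorial_mul_prod_range_factorial] at key
  apply Nat.eq_of_mul_eq_mul_left (Nat.mul_pos (factorial_pos m) (superFactorial_pos (2*m)))
  linear_combination key

theorem asm_vsasm_identity_general (m : ℕ) :
    (Nat.choose (3*m) m : ℚ) * (Nat.factorial (2*m) : ℚ) *
      ∏ j ∈ Finset.range (2*m),
        (Nat.factorial (3*j+1) : ℚ) / (Nat.factorial (2*m + j + 1) : ℚ) =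
    ((1 / 2 ^ m : ℚ) * ∏ i ∈ Finset.Icc 1 m,
      ((Nat.factorial (6*i-2) : ℚ) * (Nat.factorial (2*i-1) : ℚ)) /
        ((Nat.factorial (4*i-1) : ℚ) * (Nat.factorial (4*i-2) : ℚ))) ^ 2 := by
  have key := congrArg (Nat.cast : ℕ → ℚ) (choose_mul_factorial_mul_prod_eq m)
  push_cast at key
  rw [show (4 : ℚ) ^ m = (2 ^ m) ^ 2 by rw [← pow_mul, mul_comm, pow_mul]; norm_num] at key
  have h6 (i : ℕ) : 6*(i+1)-2 = 6*i+4 := by omega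
  have h2 (i : ℕ) : 2*(i+1)-1 = 2*i+1 := by omega
  have h43 (i : ℕ) : 4*(i+1)-1 = 4*i+3 := by omega
  have h42 (i : ℕ) : 4*(i+1)-2 = 4*i+2 := by omega
  simp only [prod_div_distrib, prod_Icc_one_eq_prod_range, h6, h2, h43, h42]
  field_simp
  linear_combination key

/-- For every positive integer `m`,
`C(3m, m)·(2m)!·Π_{j=0}^{2m−1} (3j+1)!/(2m+j+1)!`
equals `((1/2^m)·Π_{i=1}^{m} (6i−2)!(2i−1)!/((4i−1)!(4i−2)!))^2`. -/
theorem asm_vsasm_identity (m : ℕ) (hm : 0 < m) :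
    (Nat.choose (3*m) m : ℚ) * (Nat.factorial (2*m) : ℚ) *
      ∏ j ∈ Finset.range (2*m),
        (Nat.factorial (3*j+1) : ℚ) / (Nat.factorial (2*m + j + 1) : ℚ) =
    ((1 / 2 ^ m : ℚ) * ∏ i ∈ Finset.Icc 1 m,
      ((Nat.factorial (6*i-2) : ℚ) * (Nat.factorial (2*i-1) : ℚ)) /
        ((Nat.factorial (4*i-1) : ℚ) * (Nat.factorial (4*i-2) : ℚ))) ^ 2 :=
  asm_vsasm_identity_general m
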